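/- arXiv:1408.6943 — 5 statements merged into one kernel-verified Lean document; each statement's English description precedes it below -/
import Mathlib

section
/- Let q be a prime power and n ≥ 1. The number of tuples (d_1,...,d_n) ∈ F_q^n such that the n×n matrix over F_q with diagonal entries d_1,...,d_n and all off-diagonal entries equal to 1 is invertible equals ((q-1)^(n+1) + (-1)^n)/q + n·(q-1)^(n-1). -/
/-!
Put `e = d - 1`, so that the matrix is `diagonal e + J` with `J` the all-ones matrix; a kernel
vector `v` is a solution of `e i * v i + ∑ j, v j = 0` for all `i`. Solving this system shows
that the matrix is invertible exactly when a single `e i` vanishes, or when all `e i ≠ 0` and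
`∑ (e i)⁻¹ ≠ -1`. The first kind contributes `n (q-1)^(n-1)`. After substituting `x = e⁻¹`, the
second kind counts `x ∈ (Fˣ)ⁿ` with `∑ x ≠ -1`; solving for one coordinate, these correspond to
`x ∈ (Fˣ)ⁿ⁺¹` with `∑ x = -1`, and the resulting recursion `S (n+1) = (q-1)^n - S n`, `S 0 = 0`
gives `q * S n = (q-1)^n - (-1)^n`.
-/

open Finset Matrix

lemma of_ite_eq_diagonal_add_of_one {R ι : Type*} [Ring R] [DecidableEq ι] (d : ι → R) :
    (of fun i j => if i = j then d i else 1) = diagonal (d - 1) + of fun _ _ => 1 := by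
  ext i j
  by_cases h : i = j <;> simp [h, diagonal_apply_ne]

section Determinant

variable {K ι : Type*} [Field K] [Fintype ι]

lemma eq_zero_of_mul_add_sum_eq_zero {e v : ι → K}
    (he : (∃! i, e i = 0) ∨ ((∀ i, e i ≠ 0) ∧ ∑ i, (e i)⁻¹ ≠ -1))
    (hv : ∀ i, e i * v i + ∑ j, v j = 0) : v = 0 := by
  funext j
  rcases he with ⟨i, hi, huniq⟩ | ⟨hne, hsum⟩
  · have hs : ∑ j, v j = 0 := by simpa [hi] using hv i
    have hvj : ∀ j, j ≠ i → v j = 0 := fun j hj =>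
      (mul_eq_zero.mp (by simpa [hs] using hv j)).resolve_left fun h => hj (huniq j h)
    by_cases hj : j = i
    · rwa [hj, ← sum_eq_single_of_mem i (mem_univ i) fun j _ => hvj j]
    · exact hvj j hj
  · have hvj : ∀ j, v j = -(∑ k, v k) * (e j)⁻¹ := fun j => by
      field_simp [hne j]
      linear_combination hv j
    have hs : ∑ j, v j = 0 := by
      have hfix : (∑ j, v j) * (1 + ∑ j, (e j)⁻¹) = 0 := by
        have : ∑ j, v j = -(∑ k, v k) * ∑ j, (e j)⁻¹ := by
          rw [mul_sum]
          exact sum_congr rfl fun j _ => hvj j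
        linear_combination this
      exact (mul_eq_zero.mp hfix).resolve_right fun h => hsum (by linear_combination h)
    simpa [hs] using hvj j

variable [DecidableEq ι]

lemma mulVec_diagonal_add_of_one (e v : ι → K) (i : ι) :
    ((diagonal e + of fun _ _ => (1 : K)) *ᵥ v) i = e i * v i + ∑ j, v j := by
  rw [add_mulVec, Pi.add_apply, mulVec_diagonal]
  simp [mulVec, dotProduct]

lemma det_diagonal_add_of_one_ne_zero_iff (e : ι → K) :
    (diagonal e + of fun _ _ => (1 : K)).det ≠ 0 ↔
      (∃! i, e i = 0) ∨ ((∀ i, e i ≠ 0) ∧ ∑ i, (e i)⁻¹ ≠ -1) := by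
  have hker : ∀ v, (diagonal e + of fun _ _ => (1 : K)) *ᵥ v = 0 ↔
      ∀ i, e i * v i + ∑ j, v j = 0 := by
    simp [funext_iff, mulVec_diagonal_add_of_one]
  rw [Ne, ← exists_mulVec_eq_zero_iff]
  simp only [hker, not_exists, not_and]
  refine ⟨fun h => ?_, fun he v hv0 hv => hv0 (eq_zero_of_mul_add_sum_eq_zero he hv)⟩
  by_cases hzero : ∃ i, e i = 0
  · obtain ⟨i, hi⟩ := hzero
    refine Or.inl ⟨i, hi, fun k hk => ?_⟩
    by_contra hki
    refine h (Pi.single i 1 - Pi.single k 1) (fun hv => ?_) fun j => ?_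
    · simpa [Pi.single_apply, Ne.symm hki] using congrFun hv i
    · by_cases hji : j = i
      · subst hji; simp [hi]
      · by_cases hjk : j = k
        · subst hjk; simp [hk]
        · simp [Pi.single_apply, hji, hjk]
  · have hne : ∀ i, e i ≠ 0 := not_exists.mp hzero
    refine Or.inr ⟨hne, fun hsum => h (fun i => (e i)⁻¹) (fun hv => ?_) fun i => ?_⟩
    · simp [congrFun hv] at hsum
    · rw [mul_inv_cancel₀ (hne i), hsum, add_neg_cancel]

end Determinant

section Counting

variable {F ι : Type*} [Field F] [Fintype F] [DecidableEq F] [Fintype ι] [DecidableEq ι]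

lemma card_forall_ne_zero :
    #{x : ι → F | ∀ i, x i ≠ 0} = (Fintype.card F - 1) ^ Fintype.card ι := by
  have : ({x : ι → F | ∀ i, x i ≠ 0} : Finset _) = Fintype.piFinset fun _ => {0}ᶜ := by
    ext x; simp
  simp [this, card_compl]

open scoped Classical in
lemma card_existsUnique_eq_zero :
    #{x : ι → F | ∃! i, x i = 0} =
      Fintype.card ι * (Fintype.card F - 1) ^ (Fintype.card ι - 1) := by
  have hfiber : ∀ i, ({x : ι → F | x i = 0 ∧ ∀ j, x j = 0 → j = i} : Finset _) =
      Fintype.piFinset fun j => if j = i then {0} else {0}ᶜ := by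
    intro i; ext x
    simp only [mem_filter, mem_univ, true_and, Fintype.mem_piFinset]
    refine ⟨fun ⟨hi, huniq⟩ j => ?_, fun h => ⟨by simpa using h i, fun j hj => ?_⟩⟩
    · split_ifs with hji
      · simpa [hji] using hi
      · simpa using mt (huniq j) hji
    · by_contra hji
      simpa [hji, hj] using h j
  have hunion : ({x : ι → F | ∃! i, x i = 0} : Finset _) =
      univ.biUnion fun i => {x : ι → F | x i = 0 ∧ ∀ j, x j = 0 → j = i} := by
    ext x; simp only [mem_filter, mem_univ, true_and, mem_biUnion]; rfl
  rw [hunion, card_biUnion]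
  · simp [hfiber, apply_ite, card_compl, prod_ite, filter_ne', card_erase_of_mem]
  · intro i _ k _ hik
    simp only [Function.onFun, disjoint_left, mem_filter, mem_univ, true_and]
    exact fun x hi hk => hik (hk.2 i hi.1)

lemma card_sum_eq_add_card_sum_ne (c : F) (n : ℕ) :
    #{x : Fin n → F | (∀ i, x i ≠ 0) ∧ ∑ i, x i = c} +
      #{x : Fin n → F | (∀ i, x i ≠ 0) ∧ ∑ i, x i ≠ c} = (Fintype.card F - 1) ^ n := by
  rw [← filter_filter, ← filter_filter, card_filter_add_card_filter_not]
  -- `convert` bridges the `Fin`-specific decidability instance of `∀ i : Fin n, _`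
  convert card_forall_ne_zero (F := F) (ι := Fin n)
  exact (Fintype.card_fin n).symm

lemma card_sum_eq_succ (c : F) (n : ℕ) :
    #{x : Fin (n + 1) → F | (∀ i, x i ≠ 0) ∧ ∑ i, x i = c} =
      #{y : Fin n → F | (∀ i, y i ≠ 0) ∧ ∑ i, y i ≠ c} := by
  refine card_nbij' Fin.tail (fun y => Fin.cons (c - ∑ i, y i) y) (fun x hx => ?_)
    (fun y hy => ?_) (fun x hx => ?_) (fun y _ => Fin.tail_cons _ _)
  · simp only [mem_coe, mem_filter, mem_univ, true_and, Fin.sum_univ_succ] at hx ⊢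
    refine ⟨fun i => hx.1 i.succ, fun h => hx.1 0 ?_⟩
    simp only [Fin.tail] at h
    linear_combination hx.2 - h
  · simp only [mem_coe, mem_filter, mem_univ, true_and, Fin.sum_univ_succ] at hy ⊢
    refine ⟨fun i => Fin.cases ?_ (fun j => ?_) i, by simp⟩
    · simpa [sub_eq_zero] using Ne.symm hy.2
    · simpa using hy.1 j
  · simp only [mem_coe, mem_filter, mem_univ, true_and, Fin.sum_univ_succ] at hx
    change Fin.cons (c - ∑ i : Fin n, x i.succ) (Fin.tail x) = x
    rw [← hx.2, add_sub_cancel_right, Fin.cons_self_tail]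

lemma card_sum_eq_mul_card {c : F} (hc : c ≠ 0) (n : ℕ) :
    (#{x : Fin n → F | (∀ i, x i ≠ 0) ∧ ∑ i, x i = c} : ℚ) * Fintype.card F =
      ((Fintype.card F : ℚ) - 1) ^ n - (-1) ^ n := by
  induction n with
  | zero => simp [Ne.symm hc]
  | succ n ih =>
    have hsplit := card_sum_eq_add_card_sum_ne c n
    rw [← card_sum_eq_succ] at hsplit
    qify [Fintype.card_pos] at hsplit
    linear_combination (Fintype.card F : ℚ) * hsplit - ih

lemma card_sum_ne_mul_card {c : F} (hc : c ≠ 0) (n : ℕ) :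
    (#{x : Fin n → F | (∀ i, x i ≠ 0) ∧ ∑ i, x i ≠ c} : ℚ) * Fintype.card F =
      ((Fintype.card F : ℚ) - 1) ^ (n + 1) + (-1) ^ n := by
  rw [← card_sum_eq_succ, card_sum_eq_mul_card hc]
  ring

end Counting

theorem stmt_0_general (F : Type*) [Field F] [Fintype F] (n : ℕ) :
    (Nat.card {d : Fin n → F //
        (Matrix.of fun i j => if i = j then d i else 1).det ≠ 0} : ℚ)
      = (((Fintype.card F : ℚ) - 1) ^ (n + 1) + (-1) ^ n) / (Fintype.card F : ℚ)
        + n * ((Fintype.card F : ℚ) - 1) ^ (n - 1) := by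
  classical
  have hshift : #{d : Fin n → F | (of fun i j => if i = j then d i else 1).det ≠ 0} =
      #{e : Fin n → F | (∃! i, e i = 0) ∨ ((∀ i, e i ≠ 0) ∧ ∑ i, (e i)⁻¹ ≠ -1)} :=
    card_equiv (Equiv.subRight 1) fun d => by
      simp only [mem_filter, mem_univ, true_and, of_ite_eq_diagonal_add_of_one,
        det_diagonal_add_of_one_ne_zero_iff]
      rfl
  have hinv : #{e : Fin n → F | (∀ i, e i ≠ 0) ∧ ∑ i, (e i)⁻¹ ≠ -1} =
      #{x : Fin n → F | (∀ i, x i ≠ 0) ∧ ∑ i, x i ≠ -1} :=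
    card_equiv (Equiv.inv _) fun e => by simp
  have hdisj : Disjoint ({e | ∃! i, e i = 0} : Finset (Fin n → F))
      ({e | (∀ i, e i ≠ 0) ∧ ∑ i, (e i)⁻¹ ≠ -1} : Finset (Fin n → F)) :=
    disjoint_filter.mpr fun e _ ⟨i, hi, _⟩ ⟨hne, _⟩ => hne i hi
  rw [Nat.card_eq_fintype_card, Fintype.card_subtype, hshift, filter_or,
    card_union_of_disjoint hdisj, hinv, card_existsUnique_eq_zero]
  have hT := card_sum_ne_mul_card (F := F) (neg_ne_zero.mpr one_ne_zero) n
  have hq : (Fintype.card F : ℚ) ≠ 0 := Nat.cast_ne_zero.mpr Fintype.card_ne_zero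
  push_cast [Nat.cast_pred Fintype.card_pos, Fintype.card_fin]
  field_simp
  linear_combination hT

/-- The number of invertible Schrödinger operators of the complete graph `K_n`
over the finite field `F` with `q` elements equals
`((q-1)^(n+1) + (-1)^n)/q + n*(q-1)^(n-1)`. -/
theorem stmt_0 (F : Type*) [Field F] [Fintype F] (n : ℕ) (hn : 1 ≤ n) :
    (Nat.card {d : Fin n → F //
        (Matrix.of fun i j => if i = j then d i else 1).det ≠ 0} : ℚ)
      = (((Fintype.card F : ℚ) - 1) ^ (n + 1) + (-1) ^ n) / (Fintype.card F : ℚ)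
        + n * ((Fintype.card F : ℚ) - 1) ^ (n - 1) :=
  stmt_0_general F n
end

section
/- Let q be a prime power and n ≥ 2. The number of diagonal perturbations (d_1,...,d_n) ∈ F_q^n such that the adjacency matrix of the star graph with one center and n-1 leaves plus diag(d_1,...,d_n) is invertible over F_q equals (q² + (n-3)q + 1)(q-1)^(n-2). -/
/-!
Write `d₀` for the potential at the centre and `w` for the potentials at the leaves. When no `wᵢ`
vanishes, the Schur complement of the diagonal leaf block gives
`det = d₀ ∏ wᵢ - ∑ⱼ ∏_{i ≠ j} wᵢ`; being a polynomial identity, this then holds for all `d`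
(check it at the generic point, in the fraction field of `ℤ[X]`).

For fixed `w` the determinant is affine in `d₀`. If no `wᵢ` vanishes exactly one value of `d₀` is
bad, leaving `q - 1`; if exactly one `wⱼ` vanishes the determinant is the nonzero constant
`-∏_{i ≠ j} wᵢ`, so all `q` values are good; if two vanish it is `0`. There are `(q - 1) ^ (n - 1)`
leaf vectors of the first kind and `(n - 1) (q - 1) ^ (n - 2)` of the second.
-/

open Finset Matrix

namespace StarGraph

variable {ι : Type*}

section Determinant

variable [DecidableEq ι] {R : Type*} [CommRing R]

def starSchrodinger (d : Unit ⊕ ι → R) :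
    Matrix (Unit ⊕ ι) (Unit ⊕ ι) R :=
  Matrix.of fun i j => if i = j then d i else if i.isLeft ∨ j.isLeft then 1 else 0

theorem starSchrodinger_eq_fromBlocks (d : Unit ⊕ ι → R) :
    starSchrodinger d = fromBlocks (of fun _ _ => d (.inl ())) (of fun _ _ => 1) (of fun _ _ => 1)
      (diagonal (d ∘ .inr)) := by
  ext (⟨⟩ | i) (⟨⟩ | j) <;> simp [starSchrodinger, diagonal_apply]

variable [Fintype ι]

theorem mapMatrix_starSchrodinger {S : Type*} [CommRing S] (f : R →+* S)
    (d : Unit ⊕ ι → R) : f.mapMatrix (starSchrodinger d) = starSchrodinger (f ∘ d) := by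
  ext i j
  simp only [RingHom.mapMatrix_apply, map_apply, starSchrodinger, of_apply, Function.comp_apply]
  split_ifs <;> simp

theorem det_starSchrodinger_of_ne_zero {K : Type*} [Field K] (d : Unit ⊕ ι → K)
    (hd : ∀ i, d (.inr i) ≠ 0) :
    (starSchrodinger d).det =
      d (.inl ()) * ∏ i, d (.inr i) - ∑ j, ∏ i ∈ univ.erase j, d (.inr i) := by
  have hinv : diagonal (d ∘ .inr) * diagonal (fun i => (d (.inr i))⁻¹) = 1 := by
    simp [diagonal_mul_diagonal, mul_inv_cancel₀ (hd _)]
  let := invertibleOfRightInverse _ _ hinv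
  rw [starSchrodinger_eq_fromBlocks, det_fromBlocks₂₂, invOf_eq_right_inv hinv,
    det_diagonal, det_unique]
  simp only [Matrix.sub_apply, mul_apply, of_apply, diagonal_apply, one_mul, mul_one, mul_ite,
    mul_zero, Finset.sum_ite_eq', mem_univ, if_true, Function.comp_apply, mul_sub, Finset.mul_sum]
  rw [mul_comm]
  congr 1
  refine Finset.sum_congr rfl fun j _ => ?_
  rw [← Finset.prod_erase_mul _ _ (mem_univ j), mul_inv_cancel_right₀ (hd j)]

theorem det_starSchrodinger (d : Unit ⊕ ι → R) :
    (starSchrodinger d).det =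
      d (.inl ()) * ∏ i, d (.inr i) - ∑ j, ∏ i ∈ univ.erase j, d (.inr i) := by
  let A := MvPolynomial (Unit ⊕ ι) ℤ
  let X : Unit ⊕ ι → A := MvPolynomial.X
  have hgeneric : (starSchrodinger X).det =
      X (.inl ()) * ∏ i, X (.inr i) - ∑ j, ∏ i ∈ univ.erase j, X (.inr i) := by
    apply IsFractionRing.injective A (FractionRing A)
    rw [RingHom.map_det, mapMatrix_starSchrodinger,
      det_starSchrodinger_of_ne_zero _ fun i => by simpa [X] using MvPolynomial.X_ne_zero _]
    simp only [map_sub, map_mul, map_prod, map_sum, Function.comp_apply]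
  have hX : MvPolynomial.eval₂Hom (Int.castRingHom R) d ∘ X = d :=
    funext (MvPolynomial.eval₂Hom_X' _ _)
  have := congrArg (MvPolynomial.eval₂Hom (Int.castRingHom R) d) hgeneric
  rw [RingHom.map_det, mapMatrix_starSchrodinger, hX] at this
  simpa only [map_sub, map_mul, map_prod, map_sum, X, MvPolynomial.eval₂Hom_X'] using this

end Determinant

section ZeroSet

variable [Fintype ι]

theorem sum_prod_erase_of_eq_zero [DecidableEq ι] {R : Type*} [CommSemiring R] {w : ι → R} {j : ι}
    (hj : w j = 0) : ∑ k, ∏ i ∈ univ.erase k, w i = ∏ i ∈ univ.erase j, w i :=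
  Finset.sum_eq_single j (fun _ _ hk => prod_eq_zero (mem_erase.2 ⟨hk.symm, mem_univ j⟩) hj)
    (absurd (mem_univ j))

variable {M : Type*} [Zero M] [DecidableEq M]

def zeroSet (w : ι → M) : Finset ι := {i | w i = 0}

theorem mem_zeroSet {w : ι → M} {i : ι} : i ∈ zeroSet w ↔ w i = 0 := by
  simp [zeroSet]

theorem card_filter_zeroSet_eq [DecidableEq ι] [Fintype M] (s : Finset ι) :
    #{w : ι → M | zeroSet w = s} = (Fintype.card M - 1) ^ (Fintype.card ι - #s) := by
  have : ({w : ι → M | zeroSet w = s} : Finset _) =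
      Fintype.piFinset fun i => if i ∈ s then {0} else univ.erase 0 := by
    ext w
    simp only [zeroSet, mem_filter, mem_univ, true_and, Fintype.mem_piFinset, Finset.ext_iff]
    refine forall_congr' fun i => ?_
    split_ifs with h <;> simp [h]
  rw [this, Fintype.card_piFinset]
  simp [apply_ite, Finset.prod_ite, card_erase_of_mem, filter_notMem_eq_sdiff, card_univ_sdiff]

end ZeroSet

section Counting

variable [Fintype ι] [DecidableEq ι] {F : Type*} [Field F] [Fintype F]

theorem card_mul_sub_ne_zero [DecidableEq F] {a : F} (ha : a ≠ 0) (b : F) :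
    #{c : F | c * a - b ≠ 0} = Fintype.card F - 1 := by
  have : ({c : F | c * a - b ≠ 0} : Finset F) = univ.erase (b / a) := by
    ext c
    simp [sub_eq_zero, eq_div_iff ha]
  rw [this, card_erase_of_mem (mem_univ _), card_univ]

theorem card_mul_prod_sub_ne_zero [DecidableEq F] (w : ι → F) :
    #{c : F | c * ∏ i, w i - ∑ j, ∏ i ∈ univ.erase j, w i ≠ 0} =
      (if zeroSet w = ∅ then Fintype.card F - 1 else 0) +
        ∑ j, if zeroSet w = {j} then Fintype.card F else 0 := by
  obtain hempty | hne := (zeroSet w).eq_empty_or_nonempty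
  · have hprod : ∏ i, w i ≠ 0 :=
      prod_ne_zero_iff.2 fun i _ hi => by simpa [hempty] using mem_zeroSet.2 hi
    simp [hempty, card_mul_sub_ne_zero hprod, eq_comm (a := ∅)]
  obtain ⟨j, hj⟩ | hnt := hne.exists_eq_singleton_or_nontrivial
  · have hj0 : w j = 0 := mem_zeroSet.1 (hj ▸ mem_singleton_self j)
    have hS : ∏ i ∈ univ.erase j, w i ≠ 0 := prod_ne_zero_iff.2 fun i hi h0 =>
      (mem_erase.1 hi).1 (by simpa [hj] using mem_zeroSet.2 h0)
    simp [hj, prod_eq_zero (mem_univ j) hj0, sum_prod_erase_of_eq_zero hj0, hS]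
  · have hsingleton : ∀ j, zeroSet w ≠ {j} := fun _ => hnt.ne_singleton
    obtain ⟨j, hj, k, hk, hjk⟩ := hnt
    have hj0 : w j = 0 := mem_zeroSet.1 hj
    have hS : ∑ j, ∏ i ∈ univ.erase j, w i = 0 := by
      rw [sum_prod_erase_of_eq_zero hj0]
      exact prod_eq_zero (mem_erase.2 ⟨hjk.symm, mem_univ k⟩) (mem_zeroSet.1 hk)
    simp [hne.ne_empty, hsingleton, prod_eq_zero (mem_univ j) hj0, hS]

theorem card_det_starSchrodinger_ne_zero :
    Nat.card {d : Unit ⊕ ι → F // (starSchrodinger d).det ≠ 0} =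
      (Fintype.card F - 1) ^ (Fintype.card ι + 1) +
        Fintype.card ι * Fintype.card F * (Fintype.card F - 1) ^ (Fintype.card ι - 1) := by
  classical
  let e : F × (ι → F) ≃ (Unit ⊕ ι → F) :=
    ((Equiv.funUnique Unit F).symm.prodCongr (Equiv.refl _)).trans
      (Equiv.sumArrowEquivProdArrow _ _ _).symm
  rw [Nat.card_eq_fintype_card, Fintype.card_subtype]
  calc #{d : Unit ⊕ ι → F | (starSchrodinger d).det ≠ 0}
      = ∑ w : ι → F, #{c : F | c * ∏ i, w i - ∑ j, ∏ i ∈ univ.erase j, w i ≠ 0} := by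
        rw [card_filter, ← e.sum_comp, Fintype.sum_prod_type_right]
        simp [e, card_filter, det_starSchrodinger]
    _ = ∑ w : ι → F, ((if zeroSet w = ∅ then Fintype.card F - 1 else 0) +
          ∑ j, if zeroSet w = {j} then Fintype.card F else 0) :=
        sum_congr rfl fun w _ => card_mul_prod_sub_ne_zero w
    _ = _ := by
        rw [sum_add_distrib, sum_comm]
        simp [← sum_filter, card_filter_zeroSet_eq]
        ring

end Counting

end StarGraph

/-- The number of invertible Schrödinger operators over `F_q` of the star graph
with one center and `n-1` leaves equals `(q² + (n-3)q + 1)(q-1)^(n-2)`. -/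
theorem stmt_4 (F : Type*) [Field F] [Fintype F] (n : ℕ) (hn : 2 ≤ n) :
    (Nat.card {d : Unit ⊕ Fin (n - 1) → F //
        (Matrix.of fun i j =>
          if i = j then d i else if i.isLeft ∨ j.isLeft then (1 : F) else 0).det ≠ 0} : ℚ)
      = ((Fintype.card F : ℚ) ^ 2 + ((n : ℚ) - 3) * (Fintype.card F : ℚ) + 1)
          * ((Fintype.card F : ℚ) - 1) ^ (n - 2) := by
  have hcount := StarGraph.card_det_starSchrodinger_ne_zero (F := F) (ι := Fin (n - 1))
  rw [Fintype.card_fin] at hcount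
  unfold StarGraph.starSchrodinger at hcount
  rw [hcount]
  obtain ⟨m, rfl⟩ : ∃ m, n = m + 2 := ⟨n - 2, by omega⟩
  have hq : 1 ≤ Fintype.card F := Fintype.card_pos
  push_cast [Nat.cast_sub hq]
  ring
end

section
/- Let F_q be a finite field and let U = Σ_{x∈F_q} [matrix (x, 1; -1, 0)] in the group ring Z[SL_2(F_q)]. Then for every odd n ≥ 1, the sum of the coefficients of U^n over all elements of SL_2(F_q) of trace 2 equals (q^(n+1) - 1)/(q² - 1), and the same holds for trace -2. -/
/-!
Right multiplication by `cycleGen x` sends a matrix with top row `(a, b)` to one with top row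
`(a x - b, a)`. Hence the number of words whose product has a given top-left entry, or a given
top row `(0, s)`, satisfies a first-order linear recurrence in the word length, and the count
with top-left entry `0` has the closed form `(q^n - (-1)^n)/(q + 1)`, where `q = |F|`.

For words of positive length and `ε = ±1`, trace `2ε` occurs exactly as often as top-left entry
`ε`: if `a ≠ 0`, each condition determines the last letter `x`; if `a = 0`, then `b c = -1`,
so `(b + ε)^2 = b (b + 2ε - c)` and `c - b = 2ε` is equivalent to `b = -ε`. Solving the
recurrences for odd length gives `(q^(n+1) - 1)/(q^2 - 1)`.
-/

open Matrix MonoidAlgebra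

/-- The element `(x, 1; -1, 0)` of `SL₂(F)`. -/
def cycleGen {F : Type*} [Field F] (x : F) : Matrix.SpecialLinearGroup (Fin 2) F :=
  ⟨!![x, 1; -1, 0], by simp [Matrix.det_fin_two_of]⟩

open Finset
open scoped MatrixGroups

theorem coeff_mul_sum_single_dotProduct {R G ι : Type*} [Semiring R] [Group G] [Fintype G]
    (a : MonoidAlgebra R G) (s : Finset ι) (γ : ι → G) (f : G → R) :
    (a * ∑ i ∈ s, single (γ i) 1).coeff ⬝ᵥ f = a.coeff ⬝ᵥ fun g => ∑ i ∈ s, f (g * γ i) := by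
  simp only [dotProduct, mul_sum, coeff_sum, Finsupp.finsetSum_apply, coeff_mul_single_apply,
    mul_one, sum_mul]
  rw [Finset.sum_comm]
  conv_rhs => rw [Finset.sum_comm]
  refine Finset.sum_congr rfl fun i _ => ?_
  refine Fintype.sum_equiv (Equiv.mulRight (γ i)⁻¹) _ _ fun g => ?_
  simp

theorem sl2_det_fin_two {R : Type*} [CommRing R] (h : SL(2, R)) :
    h 0 0 * h 1 1 - h 0 1 * h 1 0 = 1 := by
  have hdet := h.det_coe
  rwa [det_fin_two] at hdet

section

variable {F : Type*} [Field F]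

theorem coe_mul_cycleGen (h : SL(2, F)) (x : F) :
    (h : Matrix (Fin 2) (Fin 2) F) * (cycleGen x : Matrix (Fin 2) (Fin 2) F) =
      !![h 0 0 * x - h 0 1, h 0 0; h 1 0 * x - h 1 1, h 1 0] := by
  ext i j
  fin_cases i <;> fin_cases j <;>
    simp [cycleGen, Matrix.mul_apply, Fin.sum_univ_two, sub_eq_add_neg]

variable [Fintype F] [DecidableEq F]

theorem card_filter_mul_sub_eq (a b t : F) :
    #{x | a * x - b = t} = if a = 0 then (if b + t = 0 then Fintype.card F else 0) else 1 := by
  split_ifs with ha hbt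
  · simp [ha, show -b = t by linear_combination -hbt]
  · simp [ha, show -b ≠ t from fun h => hbt (by linear_combination -h)]
  · rw [card_eq_one]
    refine ⟨a⁻¹ * (t + b), ext fun x => ?_⟩
    rw [mem_filter_univ, mem_singleton, eq_inv_mul_iff_mul_eq₀ ha]
    constructor <;> intro hx <;> linear_combination hx

variable (F) in
noncomputable def cycleSum : MonoidAlgebra ℤ SL(2, F) := ∑ x : F, single (cycleGen x) 1

/-- The number of words `(x₁, …, xₙ) ∈ Fⁿ` with `cycleGen x₁ * ⋯ * cycleGen xₙ ∈ S`, that is,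
the total coefficient of `cycleSum F ^ n` on `S`. -/
noncomputable def wordCount (n : ℕ) (S : Set SL(2, F)) : ℤ :=
  (cycleSum F ^ n).coeff ⬝ᵥ S.indicator 1

theorem sum_filter_coeff_eq_wordCount (n : ℕ) (P : SL(2, F) → Prop) [DecidablePred P] :
    ∑ g ∈ univ.filter P, (cycleSum F ^ n).coeff g = wordCount n {g | P g} := by
  simp [wordCount, dotProduct, sum_filter, Set.indicator_apply]

theorem wordCount_zero (S : Set SL(2, F)) : wordCount 0 S = S.indicator 1 1 := by
  simp [wordCount, dotProduct, one_def, Finsupp.single_apply]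

theorem wordCount_succ (n : ℕ) (S : Set SL(2, F)) :
    wordCount (n + 1) S =
      (cycleSum F ^ n).coeff ⬝ᵥ fun h => ∑ x, S.indicator 1 (h * cycleGen x) := by
  rw [wordCount, pow_succ, cycleSum, coeff_mul_sum_single_dotProduct]

theorem wordCount_univ (n : ℕ) : wordCount n (Set.univ : Set SL(2, F)) = Fintype.card F ^ n := by
  induction n with
  | zero => simp [wordCount_zero]
  | succ n ih =>
    have transfer : (fun h : SL(2, F) => ∑ x : F, (Set.univ.indicator 1 (h * cycleGen x) : ℤ)) =
        (Fintype.card F : ℤ) • Set.univ.indicator 1 := by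
      ext; simp
    rw [wordCount_succ, transfer, dotProduct_smul, ← wordCount, ih, smul_eq_mul, pow_succ']

theorem sum_indicator_topLeft_mul_cycleGen (t : F) (h : SL(2, F)) :
    ∑ x, ({g : SL(2, F) | g 0 0 = t}.indicator 1 (h * cycleGen x) : ℤ) =
      #{x | h 0 0 * x - h 0 1 = t} := by
  simp [Set.indicator_apply, coe_mul_cycleGen]

theorem wordCount_topLeft_succ (n : ℕ) (t : F) :
    wordCount (n + 1) {g : SL(2, F) | g 0 0 = t} =
      (Fintype.card F : ℤ) ^ n - wordCount n {g : SL(2, F) | g 0 0 = 0} +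
        Fintype.card F * wordCount n {g : SL(2, F) | g 0 0 = 0 ∧ g 0 1 = -t} := by
  have transfer : (fun h : SL(2, F) => ∑ x : F,
      ({g : SL(2, F) | g 0 0 = t}.indicator 1 (h * cycleGen x) : ℤ)) =
        Set.univ.indicator 1 - {g | g 0 0 = 0}.indicator 1 +
          (Fintype.card F : ℤ) • {g | g 0 0 = 0 ∧ g 0 1 = -t}.indicator 1 := by
    ext h
    rw [sum_indicator_topLeft_mul_cycleGen, card_filter_mul_sub_eq]
    by_cases ha : h 0 0 = 0 <;> by_cases hb : h 0 1 = -t <;>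
      simp [ha, hb, ← eq_neg_iff_add_eq_zero]
  rw [wordCount_succ, transfer, dotProduct_add, dotProduct_sub, dotProduct_smul, ← wordCount,
    ← wordCount, ← wordCount, wordCount_univ, smul_eq_mul]

theorem wordCount_topRow_zero_zero (n : ℕ) :
    wordCount n {g : SL(2, F) | g 0 0 = 0 ∧ g 0 1 = 0} = 0 := by
  have empty : {g : SL(2, F) | g 0 0 = 0 ∧ g 0 1 = 0} = ∅ :=
    Set.eq_empty_of_forall_notMem fun g ⟨h00, h01⟩ => by simpa [h00, h01] using sl2_det_fin_two g
  simp [wordCount, empty]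

theorem wordCount_topRow_succ (n : ℕ) {s : F} (hs : s ≠ 0) :
    wordCount (n + 1) {g : SL(2, F) | g 0 0 = 0 ∧ g 0 1 = s} =
      wordCount n {g : SL(2, F) | g 0 0 = s} := by
  have transfer : (fun h : SL(2, F) => ∑ x : F,
      ({g : SL(2, F) | g 0 0 = 0 ∧ g 0 1 = s}.indicator 1 (h * cycleGen x) : ℤ)) =
        {g | g 0 0 = s}.indicator 1 := by
    ext h
    by_cases ha : h 0 0 = s
    · simpa [Set.indicator_apply, coe_mul_cycleGen, ha, hs] using
        card_filter_mul_sub_eq s (h 0 1) 0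
    · simp [coe_mul_cycleGen, ha]
  rw [wordCount_succ, transfer, wordCount]

theorem sum_indicator_trace_mul_cycleGen (t : F) (h : SL(2, F)) :
    ∑ x, ({g : SL(2, F) | Matrix.trace (g : Matrix (Fin 2) (Fin 2) F) = t}.indicator 1
      (h * cycleGen x) : ℤ) = #{x | h 0 0 * x - h 0 1 = t - h 1 0} := by
  simp [Set.indicator_apply, coe_mul_cycleGen, trace_fin_two, eq_sub_iff_add_eq]

theorem wordCount_trace_succ (n : ℕ) {ε : F} (hε : ε ^ 2 = 1) :
    wordCount (n + 1) {g : SL(2, F) | Matrix.trace (g : Matrix (Fin 2) (Fin 2) F) = 2 * ε} =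
      wordCount (n + 1) {g : SL(2, F) | g 0 0 = ε} := by
  rw [wordCount_succ, wordCount_succ]
  congr 1
  ext h
  rw [sum_indicator_trace_mul_cycleGen, sum_indicator_topLeft_mul_cycleGen,
    card_filter_mul_sub_eq, card_filter_mul_sub_eq]
  by_cases ha : h 0 0 = 0
  · have hbc : h 0 1 * h 1 0 = -1 := by linear_combination h 1 1 * ha - sl2_det_fin_two h
    have key : h 0 1 + (2 * ε - h 1 0) = 0 ↔ h 0 1 + ε = 0 := by
      constructor
      · intro H
        exact pow_eq_zero_iff two_ne_zero |>.mp (by linear_combination h 0 1 * H + hbc + hε)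
      · intro H
        linear_combination (1 - ε * h 1 0) * H + ε * hbc + h 1 0 * hε
    simp only [if_pos ha, key]
  · rw [if_neg ha, if_neg ha]

theorem wordCount_topLeft_zero_mul (n : ℕ) :
    wordCount n {g : SL(2, F) | g 0 0 = 0} * (Fintype.card F + 1) =
      (Fintype.card F : ℤ) ^ n - (-1) ^ n := by
  induction n with
  | zero => simp [wordCount_zero]
  | succ n ih =>
    rw [wordCount_topLeft_succ, neg_zero, wordCount_topRow_zero_zero]
    linear_combination -ih

theorem wordCount_topLeft_odd_mul (k : ℕ) {t : F} (ht : t ≠ 0) :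
    wordCount (2 * k + 1) {g : SL(2, F) | g 0 0 = t} * ((Fintype.card F : ℤ) ^ 2 - 1) =
      (Fintype.card F : ℤ) ^ (2 * k + 2) - 1 := by
  induction k generalizing t with
  | zero => simp [wordCount_topLeft_succ, wordCount_zero]
  | succ k ih =>
    have step := wordCount_topLeft_succ (F := F) (2 * k + 2) t
    rw [wordCount_topRow_succ _ (neg_ne_zero.mpr ht)] at step
    have even := wordCount_topLeft_zero_mul (F := F) (2 * k + 2)
    rw [(Even.neg_one_pow ⟨k + 1, by ring⟩ : (-1 : ℤ) ^ (2 * k + 2) = 1)] at even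
    rw [show 2 * (k + 1) + 1 = 2 * k + 2 + 1 by ring]
    linear_combination ((Fintype.card F : ℤ) ^ 2 - 1) * step - (Fintype.card F - 1) * even +
      Fintype.card F * ih (neg_ne_zero.mpr ht)

end

theorem stmt_6_general (F : Type*) [Field F] [Fintype F] [DecidableEq F]
    (n : ℕ) (hodd : Odd n)
    (U : MonoidAlgebra ℤ (Matrix.SpecialLinearGroup (Fin 2) F))
    (hU : U = ∑ x : F, MonoidAlgebra.single (cycleGen x) 1) :
    ((∑ g ∈ Finset.univ.filter
        (fun g : Matrix.SpecialLinearGroup (Fin 2) F =>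
          Matrix.trace (g : Matrix (Fin 2) (Fin 2) F) = 2), (U ^ n).coeff g : ℤ) : ℚ)
      = ((Fintype.card F : ℚ) ^ (n + 1) - 1) / ((Fintype.card F : ℚ) ^ 2 - 1)
    ∧
    ((∑ g ∈ Finset.univ.filter
        (fun g : Matrix.SpecialLinearGroup (Fin 2) F =>
          Matrix.trace (g : Matrix (Fin 2) (Fin 2) F) = -2), (U ^ n).coeff g : ℤ) : ℚ)
      = ((Fintype.card F : ℚ) ^ (n + 1) - 1) / ((Fintype.card F : ℚ) ^ 2 - 1) := by
  obtain ⟨k, rfl⟩ := hodd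
  obtain rfl : U = cycleSum F := hU
  have hq : (2 : ℚ) ≤ Fintype.card F := mod_cast Fintype.one_lt_card
  have hden : (Fintype.card F : ℚ) ^ 2 - 1 ≠ 0 := by nlinarith
  have trace_two := wordCount_trace_succ (F := F) (2 * k) (ε := 1) (one_pow 2)
  have trace_neg_two := wordCount_trace_succ (F := F) (2 * k) (ε := -1) (by norm_num)
  rw [mul_one] at trace_two
  rw [mul_neg_one] at trace_neg_two
  have top_left_one := wordCount_topLeft_odd_mul (F := F) k one_ne_zero
  have top_left_neg_one := wordCount_topLeft_odd_mul (F := F) k (neg_ne_zero.mpr one_ne_zero)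
  simp only [sum_filter_coeff_eq_wordCount, trace_two, trace_neg_two, eq_div_iff hden]
  exact ⟨mod_cast top_left_one, mod_cast top_left_neg_one⟩

/-- For `U = Σ_{x∈F_q} [(x,1;-1,0)] ∈ ℤ[SL₂(F_q)]` and odd `n`, the sum of the
coefficients of `U^n` over elements of trace `2` is `(q^(n+1)-1)/(q²-1)`, and the
same holds for trace `-2`. -/
theorem stmt_6 (F : Type*) [Field F] [Fintype F] [DecidableEq F]
    (n : ℕ) (hn : 1 ≤ n) (hodd : Odd n)
    (U : MonoidAlgebra ℤ (Matrix.SpecialLinearGroup (Fin 2) F))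
    (hU : U = ∑ x : F, MonoidAlgebra.single (cycleGen x) 1) :
    ((∑ g ∈ Finset.univ.filter
        (fun g : Matrix.SpecialLinearGroup (Fin 2) F =>
          Matrix.trace (g : Matrix (Fin 2) (Fin 2) F) = 2), (U ^ n).coeff g : ℤ) : ℚ)
      = ((Fintype.card F : ℚ) ^ (n + 1) - 1) / ((Fintype.card F : ℚ) ^ 2 - 1)
    ∧
    ((∑ g ∈ Finset.univ.filter
        (fun g : Matrix.SpecialLinearGroup (Fin 2) F =>
          Matrix.trace (g : Matrix (Fin 2) (Fin 2) F) = -2), (U ^ n).coeff g : ℤ) : ℚ)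
      = ((Fintype.card F : ℚ) ^ (n + 1) - 1) / ((Fintype.card F : ℚ) ^ 2 - 1) :=
  stmt_6_general F n hodd U hU
end

section
/- Let T be a finite tree with n vertices and let S_T(q) count the invertible Schrödinger operators of T over F_q, viewed as a polynomial in q. Then S_T satisfies the functional equation S_T(q) = (-q)^n · S_T(1/q) (sign-degree-palindromicity). -/
/-!
Over a field with `q` elements, let `N(S)` count the diagonals on a vertex set `S` of the tree for
which the Schrödinger operator of the induced forest is invertible. Its determinant is affine in
the entry at a vertex `v`, with slope the minor of `S - v`. Choosing `v` of degree at most one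
in `S`, the constant term is `0` if `v` is isolated and minus the minor of `S - v - u` if `v` has
the single neighbour `u`; counting the fibres gives `N(S) = (q - 1) N(S - v)`, resp.
`N(S) = (q - 1) N(S - v) + q N(S - v - u)`. Multiplying by `q - 1` and by `q` raises the
sign-degree of palindromicity by one and two, so `N(S)` is a sign-degree-palindromic polynomial
in `q` of degree `|S|`, which agrees with `S_T` at every prime.
-/

open Finset Function

namespace Matrix

variable {n R : Type*} [DecidableEq n] [CommRing R]

-- The principal submatrix on `s`, padded with the identity so that it stays indexed by `n`.
def principal (M : Matrix n n R) (s : Finset n) : Matrix n n R :=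
  of fun i j => if i ∈ s ∧ j ∈ s then M i j else (1 : Matrix n n R) i j

@[simp]
theorem principal_empty (M : Matrix n n R) : M.principal ∅ = 1 := by
  ext i j; simp [principal]

theorem principal_principal (M : Matrix n n R) (s t : Finset n) :
    (M.principal s).principal t = M.principal (s ∩ t) := by
  ext i j; simp only [principal, of_apply, mem_inter]; grind

theorem principal_transpose (M : Matrix n n R) (s : Finset n) :
    (M.principal s)ᵀ = Mᵀ.principal s := by
  ext i j; simp only [principal, transpose_apply, of_apply, one_apply]; grind

theorem principal_congr {M N : Matrix n n R} {s : Finset n}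
    (h : ∀ i ∈ s, ∀ j ∈ s, M i j = N i j) : M.principal s = N.principal s := by
  ext i j; simp only [principal, of_apply]; grind

variable [Fintype n]

@[simp]
theorem principal_univ (M : Matrix n n R) : M.principal univ = M := by
  ext i j; simp [principal]

theorem det_eq_mul_det_principal_erase_of_row {X : Matrix n n R} {k : n} {a : R}
    (h : X k = a • Pi.single k 1) : X.det = a * (X.principal (univ.erase k)).det := by
  have hclear : (X.principal (univ.erase k)).det = (X.updateRow k (Pi.single k 1)).det :=
    det_eq_of_forall_row_eq_smul_add_const (fun i => if i = k then 0 else - X i k) k (by simp)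
      fun i j => by
        simp only [principal, updateRow_apply, Pi.single_apply, one_apply, of_apply, mem_erase]
        grind
  rw [hclear, ← det_updateRow_smul, ← h, updateRow_eq_self]

theorem det_eq_mul_det_principal_erase_of_col {X : Matrix n n R} {k : n} {a : R}
    (h : Xᵀ k = a • Pi.single k 1) : X.det = a * (X.principal (univ.erase k)).det := by
  rw [← det_transpose, det_eq_mul_det_principal_erase_of_row h, ← principal_transpose,
    det_transpose]

theorem det_principal_eq_add_of_eq_off_diag {M N : Matrix n n R} {s : Finset n} {v : n}
    (hv : v ∈ s) (h : ∀ i j, (i ≠ v ∨ j ≠ v) → N i j = M i j) :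
    (N.principal s).det
      = (M.principal s).det + (N v v - M v v) * (M.principal (s.erase v)).det := by
  set X := M.principal s
  have hN : N.principal s = X.updateRow v (X v + (N v v - M v v) • Pi.single v 1) := by
    ext i j
    simp only [X, principal, updateRow_apply, Pi.add_apply, Pi.smul_apply, Pi.single_apply,
      of_apply, smul_eq_mul]
    rcases eq_or_ne i v with rfl | hi <;> rcases eq_or_ne j i with rfl | hj <;> simp_all
  have hpivot : (X.updateRow v (Pi.single v 1)).det = (M.principal (s.erase v)).det := by
    rw [det_eq_mul_det_principal_erase_of_row (k := v) (a := 1) (by simp), one_mul,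
      principal_congr (N := X) (by intro i hi j _; simp [(mem_erase.mp hi).1]),
      principal_principal, inter_erase, inter_univ]
  rw [hN, det_updateRow_add, updateRow_eq_self, det_updateRow_smul, hpivot]

theorem det_principal_of_pendant {M : Matrix n n R} {s : Finset n} {u v : n}
    (hv : v ∈ s) (hu : u ∈ s) (huv : u ≠ v) (hrow : ∀ w ∈ s, w ≠ u → M v w = 0)
    (hcol : ∀ w ∈ s, w ≠ u → M w v = 0) :
    (M.principal s).det = -(M v u * M u v) * (M.principal ((s.erase v).erase u)).det := by
  -- After swapping columns `u` and `v`, row `v` is a multiple of `e_v`; after pivoting on it,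
  -- column `u` is a multiple of `e_u`.
  set X := M.principal s
  set Y := X.submatrix id (Equiv.swap u v)
  have hXY : X.det = -Y.det := by
    simp [Y, det_permute', Equiv.Perm.sign_swap huv]
  have hYrow : Y v = M v u • Pi.single v 1 := by
    ext j
    simp only [Y, X, principal, submatrix_apply, id_eq, of_apply, Pi.smul_apply, Pi.single_apply,
      one_apply, smul_eq_mul, Equiv.swap_apply_def]
    grind
  set Z := Y.principal (univ.erase v)
  have hZcol : Zᵀ u = M u v • Pi.single u 1 := by
    ext i
    simp only [Z, Y, X, principal, transpose_apply, submatrix_apply, id_eq, of_apply,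
      Pi.smul_apply, Pi.single_apply, one_apply, smul_eq_mul, Equiv.swap_apply_left, mem_erase,
      mem_univ]
    grind
  have hZ : Z.principal (univ.erase u) = M.principal ((s.erase v).erase u) := by
    rw [principal_principal, principal_congr (N := X), principal_principal]
    · congr 1; ext w; simp only [mem_inter, mem_erase, mem_univ]; tauto
    · intro i _ j hj
      simp only [mem_inter, mem_erase] at hj
      simp [Y, Equiv.swap_apply_of_ne_of_ne hj.2.1 hj.1.1]
  rw [hXY, det_eq_mul_det_principal_erase_of_row hYrow,
    det_eq_mul_det_principal_erase_of_col hZcol, hZ]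
  ring

end Matrix

section Supported

variable {V : Type*} (F : Type*) [Fintype V] [DecidableEq V] [Fintype F] [DecidableEq F] [Zero F]

def supportedIn (S : Finset V) : Finset (V → F) := {d | ∀ x ∉ S, d x = 0}

variable {F}

@[simp]
theorem mem_supportedIn {S : Finset V} {d : V → F} :
    d ∈ supportedIn F S ↔ ∀ x ∉ S, d x = 0 := by
  simp [supportedIn]

theorem sum_supportedIn_eq_sum_sum_update {β : Type*} [AddCommMonoid β] {S : Finset V} {v : V}
    (hv : v ∈ S) (f : (V → F) → β) :
    ∑ d ∈ supportedIn F S, f d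
      = ∑ b ∈ supportedIn F (S.erase v), ∑ c, f (update b v c) := by
  rw [← sum_product']
  refine sum_nbij' (fun d => (update d v 0, d v)) (fun p => update p.1 v p.2) ?_ ?_ ?_ ?_ ?_ <;>
    simp only [mem_supportedIn, mem_product, mem_univ, and_true, mem_erase]
  · intro d hd x hx
    by_cases hxv : x = v <;> simp_all
  · intro p hp x hx
    rw [update_of_ne (by rintro rfl; exact hx hv)]
    exact hp x (by tauto)
  · simp
  · rintro ⟨b, c⟩ hb
    simp only [update_idem, update_self, Prod.mk.injEq, and_true]
    rw [← hb v (by simp), update_eq_self]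
  · simp

end Supported

section Affine

variable {F : Type*} [Field F] [Fintype F] [DecidableEq F]

theorem card_filter_mul_add_eq_zero {p : F} (hp : p ≠ 0) (r : F) : #{c | c * p + r = 0} = 1 :=
  card_eq_one.mpr ⟨-r / p, by ext c; simp [eq_div_iff hp, eq_neg_iff_add_eq_zero]⟩

theorem card_filter_mul_add_ne_zero {p : F} (hp : p ≠ 0) (r : F) :
    (#{c | c * p + r ≠ 0} : ℤ) = Fintype.card F - 1 := by
  have h := card_filter_add_card_filter_not (s := univ) fun c => c * p + r = 0
  rw [card_filter_mul_add_eq_zero hp r, card_univ] at h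
  simp only [ne_eq]
  omega

end Affine

namespace Polynomial

def IsSignPalindromic (n : ℕ) (P : ℤ[X]) : Prop :=
  ∀ q : ℚ, q ≠ 0 → aeval q P = (-q) ^ n * aeval q⁻¹ P

theorem isSignPalindromic_one : IsSignPalindromic 0 1 := fun q _ => by simp

namespace IsSignPalindromic

variable {n : ℕ} {P Q : ℤ[X]}

theorem add (hP : IsSignPalindromic n P) (hQ : IsSignPalindromic n Q) :
    IsSignPalindromic n (P + Q) := fun q hq => by
  simp [hP q hq, hQ q hq, mul_add]

theorem X_sub_one_mul (hP : IsSignPalindromic n P) : IsSignPalindromic (n + 1) ((X - 1) * P) :=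
  fun q hq => by
    simp only [map_mul, map_sub, aeval_X, map_one, hP q hq]
    field_simp
    ring

theorem X_mul (hP : IsSignPalindromic n P) : IsSignPalindromic (n + 2) (X * P) :=
  fun q hq => by
    simp only [map_mul, aeval_X, hP q hq]
    field_simp
    ring

end IsSignPalindromic

theorem eq_of_forall_eval_card_eq {P Q : ℤ[X]}
    (h : ∀ (F : Type) [Field F] [Fintype F],
      P.eval (Fintype.card F : ℤ) = Q.eval (Fintype.card F : ℤ)) :
    P = Q := by
  refine eq_of_infinite_eval_eq P Q <|
    (Nat.infinite_setOfPred_prime.image Nat.cast_injective.injOn).mono ?_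
  rintro _ ⟨p, hp, rfl⟩
  have : Fact p.Prime := ⟨hp⟩
  simpa [ZMod.card] using h (ZMod p)

end Polynomial

namespace SimpleGraph

section Tree

variable {V : Type*} [DecidableEq V]

theorem IsTree.exists_mem_forall_adj_eq {G : SimpleGraph V} (hT : G.IsTree) {S : Finset V}
    (hS : S.Nonempty) :
    ∃ v ∈ S, ∀ w ∈ S, ∀ w' ∈ S, G.Adj v w → G.Adj v w' → w = w' := by
  obtain ⟨r⟩ := hT.connected.nonempty
  obtain ⟨v, hv, hmax⟩ := S.exists_max_image (G.dist r) hS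
  obtain ⟨p, hp, -⟩ := (hT.connected r v).exists_path_of_dist
  refine ⟨v, hv, ?_⟩
  -- Maximality of `dist r v` forces every neighbour of `v` in `S` onto the path from `r` to `v`.
  suffices h : ∀ w ∈ S, G.Adj v w → w = p.penultimate from
    fun w hw w' hw' hadj hadj' => (h w hw hadj).trans (h w' hw' hadj').symm
  intro w hw hadj
  have hdist : G.dist r v = G.dist r w + 1 := by
    have := hT.dist_eq_dist_add_one_of_adj r hadj
    have := hmax w hw
    omega
  obtain ⟨q, hq, hql⟩ := (hT.connected r w).exists_path_of_dist
  have hvq : v ∉ q.support := fun hvq => by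
    have := (G.dist_le (q.takeUntil v hvq)).trans (q.length_takeUntil_le_length hvq)
    omega
  exact hT.isAcyclic.eq_penultimate_of_adj_end hp hadj
    (hT.isAcyclic.mem_support_of_ne_mem_support_of_adj_of_isPath hp hq hadj hvq)

end Tree

variable {V : Type*} [Fintype V] [DecidableEq V] (G : SimpleGraph V) [DecidableRel G.Adj]

section Minor

variable {F : Type*} [Field F]

def schrodinger (d : V → F) : Matrix V V F := G.adjMatrix F + Matrix.diagonal d

def schrodingerMinor (S : Finset V) (d : V → F) : F := ((G.schrodinger d).principal S).det

variable {G}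

theorem schrodingerMinor_update {S : Finset V} {v : V} (hv : v ∈ S) (d : V → F) (c : F) :
    G.schrodingerMinor S (update d v c)
      = G.schrodingerMinor S d + (c - d v) * G.schrodingerMinor (S.erase v) d := by
  have h := Matrix.det_principal_eq_add_of_eq_off_diag (M := G.schrodinger d)
    (N := G.schrodinger (update d v c)) hv fun i j hij => by
      simp only [schrodinger, Matrix.add_apply, Matrix.diagonal_apply, update_apply]
      grind
  simpa [schrodingerMinor, schrodinger] using h

theorem schrodingerMinor_update_of_notMem {S : Finset V} {v : V} (hv : v ∉ S) (d : V → F)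
    (c : F) : G.schrodingerMinor S (update d v c) = G.schrodingerMinor S d := by
  refine congrArg Matrix.det (Matrix.principal_congr fun i hi j _ => ?_)
  simp only [schrodinger, Matrix.add_apply, Matrix.diagonal_apply, update_apply]
  grind

theorem schrodingerMinor_eq_zero_of_isolated {S : Finset V} {v : V} (hv : v ∈ S)
    (hiso : ∀ w ∈ S, ¬G.Adj v w) {d : V → F} (hd : d v = 0) :
    G.schrodingerMinor S d = 0 := by
  refine Matrix.det_eq_zero_of_row_eq_zero v fun j => ?_
  simp only [Matrix.principal, schrodinger, Matrix.of_apply, Matrix.add_apply,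
    adjMatrix_apply, Matrix.diagonal_apply, Matrix.one_apply]
  grind

theorem schrodingerMinor_eq_neg_of_leaf {S : Finset V} {u v : V} (hv : v ∈ S) (hu : u ∈ S)
    (hadj : G.Adj v u) (huniq : ∀ w ∈ S, G.Adj v w → w = u) {d : V → F} (hd : d v = 0) :
    G.schrodingerMinor S d = -G.schrodingerMinor ((S.erase v).erase u) d := by
  have huv : u ≠ v := hadj.ne'
  have h := Matrix.det_principal_of_pendant (M := G.schrodinger d) hv hu huv
    (fun w hw hwu => by
      have := mt (huniq w hw) hwu
      simp only [schrodinger, Matrix.add_apply, adjMatrix_apply, Matrix.diagonal_apply]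
      grind)
    (fun w hw hwu => by
      have := mt (huniq w hw) hwu
      simp only [schrodinger, Matrix.add_apply, adjMatrix_apply, Matrix.diagonal_apply]
      grind [G.adj_comm])
  simpa [schrodingerMinor, schrodinger, hadj, hadj.symm, huv, huv.symm] using h

end Minor

section Count

variable (F : Type*) [Field F] [Fintype F] [DecidableEq F]

-- Invertible Schrödinger operators of the subgraph induced on `S`, whose diagonals are encoded
-- as functions vanishing off `S`.
def schrodingerCount (S : Finset V) : ℕ :=
  #{d ∈ supportedIn F S | G.schrodingerMinor S d ≠ 0}

theorem nat_card_eq_schrodingerCount_univ :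
    Nat.card {d : V → F // (G.adjMatrix F + Matrix.diagonal d).det ≠ 0}
      = G.schrodingerCount F univ := by
  rw [Nat.card_eq_fintype_card, Fintype.card_subtype, schrodingerCount]
  congr 1
  ext d
  simp [schrodingerMinor, schrodinger]

theorem schrodingerCount_empty : G.schrodingerCount F ∅ = 1 :=
  card_eq_one.mpr ⟨0, by ext d; simp [schrodingerMinor, funext_iff]⟩

variable {G F}

theorem schrodingerCount_eq_sum {S : Finset V} {v : V} (hv : v ∈ S) :
    G.schrodingerCount F S = ∑ b ∈ supportedIn F (S.erase v),
      #{c | c * G.schrodingerMinor (S.erase v) b + G.schrodingerMinor S b ≠ 0} := by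
  rw [schrodingerCount, card_filter, sum_supportedIn_eq_sum_sum_update hv]
  refine sum_congr rfl fun b hb => ?_
  have hbv : b v = 0 := mem_supportedIn.mp hb v (notMem_erase v S)
  simp only [card_filter, schrodingerMinor_update hv, hbv, sub_zero, add_comm]

theorem card_filter_schrodingerMinor_eq_zero {T : Finset V} {u : V} (hu : u ∈ T) :
    #{b ∈ supportedIn F T | G.schrodingerMinor T b = 0 ∧ G.schrodingerMinor (T.erase u) b ≠ 0}
      = G.schrodingerCount F (T.erase u) := by
  rw [card_filter, sum_supportedIn_eq_sum_sum_update hu, schrodingerCount, card_filter]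
  refine sum_congr rfl fun b hb => ?_
  have hbu : b u = 0 := mem_supportedIn.mp hb u (notMem_erase u T)
  simp only [schrodingerMinor_update hu, schrodingerMinor_update_of_notMem (notMem_erase u T),
    hbu, sub_zero]
  split_ifs with hne
  · rw [← card_filter, ← card_filter_mul_add_eq_zero hne (G.schrodingerMinor T b)]
    simp [hne, add_comm]
  · simp [hne]

theorem schrodingerCount_of_isolated {S : Finset V} {v : V} (hv : v ∈ S)
    (hiso : ∀ w ∈ S, ¬G.Adj v w) :
    (G.schrodingerCount F S : ℤ) = (Fintype.card F - 1) * G.schrodingerCount F (S.erase v) := by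
  rw [schrodingerCount_eq_sum hv, schrodingerCount, card_filter, Nat.cast_sum, Nat.cast_sum,
    mul_sum]
  refine sum_congr rfl fun b hb => ?_
  have hbv : b v = 0 := mem_supportedIn.mp hb v (notMem_erase v S)
  rw [schrodingerMinor_eq_zero_of_isolated hv hiso hbv]
  split_ifs with hne
  · rw [card_filter_mul_add_ne_zero hne, Nat.cast_one, mul_one]
  · simp [not_not.mp hne]

theorem schrodingerCount_of_leaf {S : Finset V} {u v : V} (hv : v ∈ S) (hu : u ∈ S)
    (hadj : G.Adj v u) (huniq : ∀ w ∈ S, G.Adj v w → w = u) :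
    (G.schrodingerCount F S : ℤ) = (Fintype.card F - 1) * G.schrodingerCount F (S.erase v)
      + Fintype.card F * G.schrodingerCount F ((S.erase v).erase u) := by
  have hu' : u ∈ S.erase v := mem_erase.mpr ⟨hadj.ne', hu⟩
  rw [schrodingerCount_eq_sum hv, ← card_filter_schrodingerMinor_eq_zero hu', schrodingerCount,
    card_filter, card_filter, Nat.cast_sum, Nat.cast_sum, Nat.cast_sum, mul_sum, mul_sum,
    ← sum_add_distrib]
  refine sum_congr rfl fun b hb => ?_
  have hbv : b v = 0 := mem_supportedIn.mp hb v (notMem_erase v S)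
  rw [schrodingerMinor_eq_neg_of_leaf hv hu hadj huniq hbv]
  by_cases hp : G.schrodingerMinor (S.erase v) b = 0
  · by_cases hs : G.schrodingerMinor ((S.erase v).erase u) b = 0 <;> simp [hp, hs]
  · simp [hp, card_filter_mul_add_ne_zero hp]

end Count

variable {G}

open Polynomial in
theorem IsTree.exists_isSignPalindromic_schrodingerCount (hT : G.IsTree) (S : Finset V) :
    ∃ P : ℤ[X], IsSignPalindromic #S P ∧ ∀ (F : Type) [Field F] [Fintype F] [DecidableEq F],
      (G.schrodingerCount F S : ℤ) = P.eval (Fintype.card F : ℤ) := by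
  induction S using Finset.strongInduction with
  | H S ih =>
  rcases S.eq_empty_or_nonempty with rfl | hS
  · exact ⟨1, isSignPalindromic_one, fun F _ _ _ => by simp [schrodingerCount_empty]⟩
  obtain ⟨v, hv, hleaf⟩ := hT.exists_mem_forall_adj_eq hS
  obtain ⟨P₁, hP₁, hc₁⟩ := ih (S.erase v) (erase_ssubset hv)
  rw [← card_erase_add_one hv]
  by_cases hnb : ∃ u ∈ S, G.Adj v u
  · obtain ⟨u, hu, hadj⟩ := hnb
    have hu' : u ∈ S.erase v := mem_erase.mpr ⟨hadj.ne', hu⟩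
    obtain ⟨P₂, hP₂, hc₂⟩ :=
      ih ((S.erase v).erase u) ((erase_ssubset hu').trans (erase_ssubset hv))
    refine ⟨(X - 1) * P₁ + X * P₂, hP₁.X_sub_one_mul.add ?_, fun F _ _ _ => ?_⟩
    · rw [← card_erase_add_one hu']
      exact hP₂.X_mul
    · rw [schrodingerCount_of_leaf hv hu hadj fun w hw h => hleaf w hw u hu h hadj, hc₁, hc₂]
      simp
  · push Not at hnb
    refine ⟨(X - 1) * P₁, hP₁.X_sub_one_mul, fun F _ _ _ => ?_⟩
    rw [schrodingerCount_of_isolated hv hnb, hc₁]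
    simp

end SimpleGraph

/-- Sign-degree-palindromicity: if `S ∈ ℤ[q]` evaluates, at the cardinality of
every finite field `F`, to the number of invertible Schrödinger operators of a
tree `T` with `n` vertices over `F`, then `S(q) = (-q)^n · S(1/q)`. -/
theorem stmt_15 (V : Type*) [Fintype V] [DecidableEq V]
    (G : SimpleGraph V) [DecidableRel G.Adj] (hT : G.IsTree)
    (S : Polynomial ℤ)
    (hS : ∀ (F : Type) [Field F] [Fintype F],
      S.eval (Fintype.card F : ℤ)
        = Nat.card {d : V → F // (G.adjMatrix F + Matrix.diagonal d).det ≠ 0})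
    (q : ℚ) (hq : q ≠ 0) :
    Polynomial.aeval q S = (-q) ^ (Fintype.card V) * Polynomial.aeval q⁻¹ S := by
  classical
  obtain ⟨P, hP, hcount⟩ := hT.exists_isSignPalindromic_schrodingerCount univ
  have hSP : S = P := Polynomial.eq_of_forall_eval_card_eq fun F _ _ => by
    rw [hS, G.nat_card_eq_schrodingerCount_univ, hcount]
  rw [hSP, ← card_univ]
  exact hP q hq
end

section
/- Let T be a finite tree with n vertices. The number of invertible T-matrices over F_q equals (q-1)^(2n-2) · S_T(q), where S_T(q) is the number of invertible Schrödinger operators of T over F_q. -/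
/-!
A `T`-matrix is `diagonal d + A_a`, where `A_a` carries an arbitrary nonzero weight `a` on each
of the `2n - 2` darts of `T`. Because a tree has no cycles, the weights can be normalised away:
propagating from a root along the unique paths yields invertible diagonal matrices `Dα`, `Dβ`
with `Dα * A_a * Dβ = A`, the adjacency matrix. This turns `diagonal d + A_a` into the
Schrödinger operator `A + diagonal (α * β * d)` without changing whether the determinant
vanishes, so each of the `(q - 1) ^ (2n - 2)` weightings contributes exactly `S_T(q)`
invertible matrices.
-/

open Matrix

namespace SimpleGraph

variable {V : Type*} {G : SimpleGraph V}

theorem IsAcyclic.eq_concat_or_eq_concat [DecidableEq V] (hG : G.IsAcyclic) {r s t : V}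
    {p : G.Walk r s} {q : G.Walk r t} (hp : p.IsPath) (hq : q.IsPath) (h : G.Adj s t) :
    q = p.concat h ∨ p = q.concat h.symm := by
  by_cases ht : t ∈ p.support
  · right
    have hpre : p.takeUntil t ht = q :=
      congrArg Subtype.val <| (hG.subsingleton_path r t).elim ⟨_, hp.takeUntil ht⟩ ⟨q, hq⟩
    have hsuf : p.dropUntil t ht = (Path.singleton h.symm : G.Walk t s) :=
      congrArg Subtype.val <|
        (hG.subsingleton_path t s).elim ⟨_, hp.dropUntil ht⟩ (Path.singleton h.symm)
    rw [← p.take_spec ht, hpre, hsuf, Walk.concat_eq_append]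
    rfl
  · left
    exact congrArg Subtype.val <|
      (hG.subsingleton_path r t).elim ⟨q, hq⟩ ⟨_, hp.concat ht h⟩

section Scaling

variable {Γ : Type*} [Group Γ]

/-- Propagates the scalings `(α s, β s)` across the dart `d = (s, t)`: the returned `(α t, β t)`
make both `α s * a d * β t` and `α t * a d.symm * β s` trivial. -/
def scalingStep (a : G.Dart → Γ) (p : Γ × Γ) (d : G.Dart) : Γ × Γ :=
  ((a d.symm * p.2)⁻¹, (p.1 * a d)⁻¹)

theorem IsTree.exists_dart_scaling (hG : G.IsTree) (a : G.Dart → Γ) :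
    ∃ α β : V → Γ, ∀ d : G.Dart, α d.fst * a d * β d.snd = 1 := by
  classical
  obtain ⟨r⟩ := hG.connected.nonempty
  choose path hpath using hG.connected.exists_isPath r
  let scaling (v : V) : Γ × Γ := (path v).darts.foldl (scalingStep a) (1, 1)
  have scaling_concat {s t : V} (h : G.Adj s t) (hst : path t = (path s).concat h) :
      scaling t = scalingStep a (scaling s) ⟨(s, t), h⟩ := by
    simp only [scaling, hst, Walk.darts_concat, List.concat_eq_append, List.foldl_append,
      List.foldl_cons, List.foldl_nil]
  refine ⟨fun v => (scaling v).1, fun v => (scaling v).2, fun ⟨(s, t), h⟩ => ?_⟩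
  rcases hG.isAcyclic.eq_concat_or_eq_concat (hpath s) (hpath t) h with hst | hts
  · simp [scaling_concat h hst, scalingStep]
  · simp [scaling_concat h.symm hts, scalingStep, Dart.symm, mul_assoc]

end Scaling

section Matrix

variable {F : Type*} [Field F] [DecidableRel G.Adj]

def dartMatrix (a : G.Dart → F) : Matrix V V F :=
  Matrix.of fun s t => if h : G.Adj s t then a ⟨(s, t), h⟩ else 0

theorem dartMatrix_one : G.dartMatrix (1 : G.Dart → F) = G.adjMatrix F := by
  ext s t
  simp [dartMatrix, adjMatrix_apply]

/-- The `T`-matrices of the statement, for an arbitrary graph `G`. -/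
def IsGraphMatrix (G : SimpleGraph V) (M : Matrix V V F) : Prop :=
  ∀ s t, s ≠ t → (M s t ≠ 0 ↔ G.Adj s t)

variable [DecidableEq V]

theorem isGraphMatrix_dartMatrix_add_diagonal (a : G.Dart → Fˣ) (d : V → F) :
    G.IsGraphMatrix (G.dartMatrix (fun e => (a e : F)) + diagonal d) := by
  intro s t hst
  by_cases h : G.Adj s t
  · simp [dartMatrix, h, hst]
  · simp [dartMatrix, h, hst]

def graphMatrixEquiv :
    {M : Matrix V V F // G.IsGraphMatrix M} ≃ (G.Dart → Fˣ) × (V → F) where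
  toFun M :=
    (fun e => Units.mk0 (M.1 e.fst e.snd) ((M.2 _ _ e.adj.ne).mpr e.adj), fun v => M.1 v v)
  invFun p := ⟨_, isGraphMatrix_dartMatrix_add_diagonal p.1 p.2⟩
  left_inv := by
    rintro ⟨M, hM⟩
    ext s t
    by_cases h : G.Adj s t
    · simp [dartMatrix, h, h.ne]
    · by_cases hst : s = t
      · simp [dartMatrix, hst]
      · simpa [dartMatrix, h, hst, eq_comm] using (not_congr (hM s t hst)).mpr h
  right_inv := by
    rintro ⟨a, d⟩
    ext e
    · simp [dartMatrix, e.adj, e.adj.ne]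
    · simp [dartMatrix]

variable [Fintype V]

theorem diagonal_mul_dartMatrix_mul_diagonal (α β : V → F) (a : G.Dart → F) :
    diagonal α * G.dartMatrix a * diagonal β =
      G.dartMatrix (fun d => α d.fst * a d * β d.snd) := by
  ext s t
  by_cases h : G.Adj s t
  · simp [dartMatrix, h]
  · simp [dartMatrix, h]

theorem IsTree.card_det_ne_zero_dartMatrix_add_diagonal (hG : G.IsTree) (a : G.Dart → Fˣ) :
    Nat.card {d : V → F // (G.dartMatrix (fun e => (a e : F)) + diagonal d).det ≠ 0} =
      Nat.card {d : V → F // (G.adjMatrix F + diagonal d).det ≠ 0} := by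
  obtain ⟨α, β, hαβ⟩ := hG.exists_dart_scaling a
  have hconj (d : V → F) : diagonal (fun v => (α v : F)) *
      (G.dartMatrix (fun e => (a e : F)) + diagonal d) * diagonal (fun v => (β v : F)) =
        G.adjMatrix F + diagonal (fun v => ((α v * β v : Fˣ) : F) * d v) := by
    rw [mul_add, add_mul, diagonal_mul_dartMatrix_mul_diagonal, diagonal_mul_diagonal,
      diagonal_mul_diagonal, ← dartMatrix_one (G := G)]
    congr 2
    · funext e; simpa using congrArg Units.val (hαβ e)
    · funext v; simp only [Units.val_mul]; ring
  have hdet (d : V → F) : (G.dartMatrix (fun e => (a e : F)) + diagonal d).det ≠ 0 ↔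
      (G.adjMatrix F + diagonal (fun v => ((α v * β v : Fˣ) : F) * d v)).det ≠ 0 := by
    rw [← hconj]
    simp [det_mul, Finset.prod_ne_zero_iff]
  exact Nat.card_congr <| Equiv.subtypeEquiv
    (Equiv.piCongrRight fun v => Equiv.mulLeft₀ _ (α v * β v).ne_zero) hdet

theorem card_isGraphMatrix_det_ne_zero [Fintype F] [DecidableEq F] :
    Nat.card {M : Matrix V V F // G.IsGraphMatrix M ∧ M.det ≠ 0} =
      ∑ a : G.Dart → Fˣ,
        Nat.card {d : V → F // (G.dartMatrix (fun e => (a e : F)) + diagonal d).det ≠ 0} := by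
  rw [← Nat.card_sigma]
  refine Nat.card_congr <| (Equiv.subtypeSubtypeEquivSubtypeInter _ _).symm.trans <|
    (graphMatrixEquiv.subtypeEquiv fun M => ?_).trans
      (Equiv.subtypeProdEquivSigmaSubtype fun (a : G.Dart → Fˣ) (d : V → F) =>
        (G.dartMatrix (fun e => (a e : F)) + diagonal d).det ≠ 0)
  conv_lhs => rw [← graphMatrixEquiv.symm_apply_apply M]
  rfl

end Matrix

end SimpleGraph

/-- The number of invertible `T`-matrices over `F_q` of a finite tree `T` with `n`
vertices equals `(q-1)^(2n-2)` times the number of invertible Schrödinger operators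
of `T` over `F_q`. -/
theorem stmt_16 (F : Type*) [Field F] [Fintype F]
    (V : Type*) [Fintype V] [DecidableEq V]
    (G : SimpleGraph V) [DecidableRel G.Adj] (hT : G.IsTree) :
    Nat.card {M : Matrix V V F //
        (∀ s t : V, s ≠ t → (M s t ≠ 0 ↔ G.Adj s t)) ∧ M.det ≠ 0}
      = (Fintype.card F - 1) ^ (2 * Fintype.card V - 2)
        * Nat.card {d : V → F // (G.adjMatrix F + Matrix.diagonal d).det ≠ 0} := by
  classical
  calc _ = ∑ a : G.Dart → Fˣ,
        Nat.card {d : V → F // (G.dartMatrix (fun e => (a e : F)) + diagonal d).det ≠ 0} :=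
      G.card_isGraphMatrix_det_ne_zero
    _ = Fintype.card (G.Dart → Fˣ) *
        Nat.card {d : V → F // (G.adjMatrix F + diagonal d).det ≠ 0} := by
      rw [Finset.sum_congr rfl fun a _ => hT.card_det_ne_zero_dartMatrix_add_diagonal a,
        Finset.sum_const, Finset.card_univ, smul_eq_mul]
    _ = _ := by
      rw [Fintype.card_fun, Fintype.card_units, G.dart_card_eq_twice_card_edges,
        ← hT.card_edgeFinset]
      rfl
end
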